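/- arXiv:2603.24447 — 7 statements merged into one kernel-verified Lean document; each statement's English description precedes it below -/
import Mathlib

section
/- Let σ be the antiholomorphic involution of ℙ¹(ℂ)×ℙ¹(ℂ) given by σ(x,y) = (ȳ, x̄). Let p and q be σ-fixed points and let r be a point of ℙ¹(ℂ)×ℙ¹(ℂ) such that the four points p, q, r, σ(r) are in general position. Then there exist A ∈ GL₂(ℂ) and μ ∈ ℂ∖{0,1,−1} such that the automorphism φ_A : (x,y) ↦ (A·x, Ā·y) of ℙ¹(ℂ)×ℙ¹(ℂ) maps p to ([1:0],[1:0]), q to ([0:1],[0:1]) and r to ([1:1],[μ:1]). -/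
noncomputable section

open ComplexConjugate

/-- The projective line `ℙ¹(K)` over a field `K`, i.e. the projectivization of `K²`. -/
abbrev Pone (K : Type) [Field K] : Type := Projectivization K (Fin 2 → K)

theorem vec_ne_zero {K : Type} [Field K] {a b : K} (h : a ≠ 0 ∨ b ≠ 0) :
    (![a, b] : Fin 2 → K) ≠ 0 := by
  intro hv
  rcases h with h | h
  · exact h (by simpa using congrFun hv 0)
  · exact h (by simpa using congrFun hv 1)

/-- The point `[a : b]` of the projective line `ℙ¹(K)`. -/
def pt {K : Type} [Field K] (a b : K) (h : a ≠ 0 ∨ b ≠ 0) : Pone K :=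
  Projectivization.mk K ![a, b] (vec_ne_zero h)

theorem mulVecLin_injective {K : Type} [Field K] (A : GL (Fin 2) K) :
    Function.Injective ⇑(Matrix.mulVecLin (A : Matrix (Fin 2) (Fin 2) K)) := by
  intro v w hvw
  have h1 : (A : Matrix (Fin 2) (Fin 2) K).mulVec v
      = (A : Matrix (Fin 2) (Fin 2) K).mulVec w := hvw
  have h2 : ((↑(A⁻¹) : Matrix (Fin 2) (Fin 2) K) * (A : Matrix (Fin 2) (Fin 2) K)).mulVec v
      = ((↑(A⁻¹) : Matrix (Fin 2) (Fin 2) K) * (A : Matrix (Fin 2) (Fin 2) K)).mulVec w := by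
    rw [← Matrix.mulVec_mulVec, ← Matrix.mulVec_mulVec, h1]
  rw [Units.inv_mul, Matrix.one_mulVec, Matrix.one_mulVec] at h2
  exact h2

/-- The action of `A ∈ GL₂(K)` on the projective line `ℙ¹(K)`: `A·[v] = [A v]`. -/
def glMap {K : Type} [Field K] (A : GL (Fin 2) K) : Pone K → Pone K :=
  Projectivization.map (Matrix.mulVecLin (A : Matrix (Fin 2) (Fin 2) K)) (mulVecLin_injective A)

/-- Coordinatewise complex conjugation on `ℙ¹(ℂ)`: `[a : b] ↦ [ā : b̄]`. -/
def conjP1 (x : Pone ℂ) : Pone ℂ :=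
  Projectivization.mk ℂ (fun i => conj (x.rep i)) (by
    intro hc
    apply x.rep_nonzero
    funext i
    have h2 : conj (x.rep i) = 0 := congrFun hc i
    simpa using h2)

/-- Entrywise complex conjugation `A ↦ Ā` on `GL₂(ℂ)`. -/
def conjGL (A : GL (Fin 2) ℂ) : GL (Fin 2) ℂ :=
  Units.map (RingHom.toMonoidHom
    ((starRingEnd ℂ).mapMatrix : Matrix (Fin 2) (Fin 2) ℂ →+* Matrix (Fin 2) (Fin 2) ℂ)) A

/-- Four points of `ℙ¹(K) × ℙ¹(K)` are in general position: their images under the first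
projection are pairwise distinct, their images under the second projection are pairwise
distinct, and there is no nonzero bilinear form
`c₀₀u₀v₀ + c₀₁u₀v₁ + c₁₀u₁v₀ + c₁₁u₁v₁` vanishing at all four points (i.e. no curve of
bidegree `(1,1)` through all four points). -/
def GenPos {K : Type} [Field K] (P₁ P₂ P₃ P₄ : Pone K × Pone K) : Prop :=
  [P₁.1, P₂.1, P₃.1, P₄.1].Pairwise (· ≠ ·) ∧
  [P₁.2, P₂.2, P₃.2, P₄.2].Pairwise (· ≠ ·) ∧
  ∀ c₀₀ c₀₁ c₁₀ c₁₁ : K,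
    (∀ P ∈ [P₁, P₂, P₃, P₄],
      c₀₀ * P.1.rep 0 * P.2.rep 0 + c₀₁ * P.1.rep 0 * P.2.rep 1 +
        c₁₀ * P.1.rep 1 * P.2.rep 0 + c₁₁ * P.1.rep 1 * P.2.rep 1 = 0) →
    c₀₀ = 0 ∧ c₀₁ = 0 ∧ c₁₀ = 0 ∧ c₁₁ = 0

/-- The antiholomorphic involution `σ(x, y) = (ȳ, x̄)` of `ℙ¹(ℂ) × ℙ¹(ℂ)` (the real structure
of the quadric `Q_{3,1}`). -/
def sigmaQ (P : Pone ℂ × Pone ℂ) : Pone ℂ × Pone ℂ := (conjP1 P.2, conjP1 P.1)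

/-- The automorphism `φ_A : (x, y) ↦ (A·x, Ā·y)` of `ℙ¹(ℂ) × ℙ¹(ℂ)`. -/
def phiA (A : GL (Fin 2) ℂ) (P : Pone ℂ × Pone ℂ) : Pone ℂ × Pone ℂ :=
  (glMap A P.1, glMap (conjGL A) P.2)

/-!
Choose `A` sending the first coordinates of `p`, `q`, `r` to the frame `∞ = [1:0]`, `0 = [0:1]`,
`1 = [1:1]` of `ℙ¹`. Since `φ_A` commutes with `σ`, the `σ`-fixed points `p`, `q` go to the
`σ`-fixed points over `∞` and `0`, and `r` goes to `([1:1], y)` with `y ≠ ∞` because the second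
coordinates are distinct, so `y = [μ:1]`, and `μ ≠ 0` for the same reason. General position is
invariant under `φ_A`, and for the four points `([1:0],[1:0])`, `([0:1],[0:1])`, `([1:1],[μ:1])`,
`σ([1:1],[μ:1]) = ([μ̄:1],[1:1])` the form `u₁v₀ - μ u₀v₁` vanishes at all of them as soon as
`μ μ̄ = 1`. Hence `|μ| ≠ 1`, in particular `μ ≠ ±1`.
-/

open Matrix

lemma List.pairwise_ne_four_iff {α : Type*} {a b c d : α} :
    [a, b, c, d].Pairwise (· ≠ ·) ↔ a ≠ b ∧ a ≠ c ∧ a ≠ d ∧ b ≠ c ∧ b ≠ d ∧ c ≠ d := by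
  simp [and_assoc]

section Field

variable {K : Type} [Field K]

lemma mk_eq_mk_of_mul_eq_mul {u v : Fin 2 → K} (hu : u ≠ 0) (hv : v ≠ 0)
    (h : u 0 * v 1 = u 1 * v 0) :
    Projectivization.mk K u hu = Projectivization.mk K v hv := by
  rw [Projectivization.mk_eq_mk_iff']
  by_cases hv0 : v 0 = 0
  · have hv1 : v 1 ≠ 0 := fun hv1 => hv (by ext i; fin_cases i <;> assumption)
    have hu0 : u 0 = 0 := by simpa [hv0, hv1] using h
    refine ⟨u 1 / v 1, ?_⟩
    ext i; fin_cases i <;> simp [hv0, hu0, hv1]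
  · refine ⟨u 0 / v 0, ?_⟩
    ext i; fin_cases i
    · simp [hv0]
    · simp [div_mul_eq_mul_div, div_eq_iff hv0, h]

lemma glMap_mk (A : GL (Fin 2) K) (v : Fin 2 → K) (hv : v ≠ 0) :
    glMap A (Projectivization.mk K v hv) =
      Projectivization.mk K ((A : Matrix (Fin 2) (Fin 2) K) *ᵥ v)
        (fun h => hv (mulVecLin_injective A (by simpa using h))) :=
  rfl

lemma glMap_eq_mk_mulVec (A : GL (Fin 2) K) (x : Pone K) :
    glMap A x = Projectivization.mk K ((A : Matrix (Fin 2) (Fin 2) K) *ᵥ x.rep)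
      (fun h => x.rep_nonzero (mulVecLin_injective A (by simpa using h))) := by
  conv_lhs => rw [← x.mk_rep]
  rfl

lemma eq_pt_of_mul_eq_mul {x : Pone K} {a b : K} (hab : a ≠ 0 ∨ b ≠ 0)
    (h : x.rep 0 * b = x.rep 1 * a) : x = pt a b hab := by
  rw [← x.mk_rep]
  exact mk_eq_mk_of_mul_eq_mul _ _ (by simpa using h)

lemma exists_eq_pt_one {x : Pone K} (hx : x ≠ pt 1 0 (Or.inl one_ne_zero)) :
    ∃ μ : K, x = pt μ 1 (Or.inr one_ne_zero) := by
  have hx1 : x.rep 1 ≠ 0 := fun h => hx (eq_pt_of_mul_eq_mul _ (by simp [h]))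
  exact ⟨x.rep 0 / x.rep 1, eq_pt_of_mul_eq_mul _ (by field_simp)⟩

lemma rep_det_ne_zero_of_ne {x y : Pone K} (hxy : x ≠ y) :
    x.rep 0 * y.rep 1 - x.rep 1 * y.rep 0 ≠ 0 := by
  intro h
  apply hxy
  rw [← x.mk_rep, ← y.mk_rep]
  exact mk_eq_mk_of_mul_eq_mul _ _ (sub_eq_zero.mp h)

lemma exists_glMap_eq_inf_zero_one {x y z : Pone K} (hxy : x ≠ y) (hxz : x ≠ z) (hyz : y ≠ z) :
    ∃ A : GL (Fin 2) K, glMap A x = pt 1 0 (Or.inl one_ne_zero) ∧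
      glMap A y = pt 0 1 (Or.inr one_ne_zero) ∧ glMap A z = pt 1 1 (Or.inl one_ne_zero) := by
  set u := x.rep
  set v := y.rep
  set w := z.rep
  have hΔ := rep_det_ne_zero_of_ne hxy
  have hα := rep_det_ne_zero_of_ne hyz
  have hβ := rep_det_ne_zero_of_ne hxz
  set α := v 0 * w 1 - v 1 * w 0
  set β := u 0 * w 1 - u 1 * w 0
  -- The rows of `M` kill `v` and `u` respectively, scaled so that `M w = -αβ • (1, 1)`.
  set M : Matrix (Fin 2) (Fin 2) K := !![β * v 1, -(β * v 0); α * u 1, -(α * u 0)]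
  have hM : M.det ≠ 0 := by
    rw [det_fin_two_of]
    have := mul_ne_zero (mul_ne_zero hα hβ) hΔ
    contrapose! this
    linear_combination -this
  refine ⟨GeneralLinearGroup.mkOfDetNeZero M hM, ?_, ?_, ?_⟩ <;>
    · rw [glMap_eq_mk_mulVec]
      apply mk_eq_mk_of_mul_eq_mul
      simp only [GeneralLinearGroup.val_mkOfDetNeZero, mulVec_fin_two, M, of_apply, cons_val',
        cons_val_zero, cons_val_one, cons_val_fin_one]
      ring

def VanishesAt (C : Matrix (Fin 2) (Fin 2) K) (P : Pone K × Pone K) : Prop :=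
  P.1.rep ⬝ᵥ C *ᵥ P.2.rep = 0

lemma vanishesAt_mk_iff (C : Matrix (Fin 2) (Fin 2) K) {u v : Fin 2 → K} (hu : u ≠ 0)
    (hv : v ≠ 0) :
    VanishesAt C (Projectivization.mk K u hu, Projectivization.mk K v hv) ↔ u ⬝ᵥ C *ᵥ v = 0 := by
  obtain ⟨a, ha⟩ := Projectivization.exists_smul_eq_mk_rep K u hu
  obtain ⟨b, hb⟩ := Projectivization.exists_smul_eq_mk_rep K v hv
  rw [VanishesAt, ← ha, ← hb, mulVec_smul, smul_dotProduct, dotProduct_smul,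
    smul_eq_zero_iff_eq, smul_eq_zero_iff_eq]

lemma vanishesAt_pt_iff (C : Matrix (Fin 2) (Fin 2) K) {a b c d : K} (hab : a ≠ 0 ∨ b ≠ 0)
    (hcd : c ≠ 0 ∨ d ≠ 0) :
    VanishesAt C (pt a b hab, pt c d hcd) ↔
      C 0 0 * a * c + C 0 1 * a * d + C 1 0 * b * c + C 1 1 * b * d = 0 := by
  rw [pt, pt, vanishesAt_mk_iff, vec2_dotProduct, mulVec_fin_two]
  simp only [cons_val_zero, cons_val_one]
  ring_nf

lemma vanishesAt_prodMap_glMap_iff (A B : GL (Fin 2) K) (C : Matrix (Fin 2) (Fin 2) K)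
    (P : Pone K × Pone K) :
    VanishesAt C (Prod.map (glMap A) (glMap B) P) ↔
      VanishesAt ((A : Matrix (Fin 2) (Fin 2) K)ᵀ * C * (B : Matrix (Fin 2) (Fin 2) K)) P := by
  rw [Prod.map, glMap_eq_mk_mulVec, glMap_eq_mk_mulVec, vanishesAt_mk_iff, VanishesAt,
    ← mulVec_mulVec, ← mulVec_mulVec, dotProduct_mulVec P.1.rep, vecMul_transpose]

lemma vanishesAt_iff (C : Matrix (Fin 2) (Fin 2) K) (P : Pone K × Pone K) :
    VanishesAt C P ↔ C 0 0 * P.1.rep 0 * P.2.rep 0 + C 0 1 * P.1.rep 0 * P.2.rep 1 +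
      C 1 0 * P.1.rep 1 * P.2.rep 0 + C 1 1 * P.1.rep 1 * P.2.rep 1 = 0 := by
  rw [VanishesAt, vec2_dotProduct, mulVec_fin_two, cons_val_zero, cons_val_one, cons_val_zero]
  ring_nf

lemma genPos_iff (P₁ P₂ P₃ P₄ : Pone K × Pone K) :
    GenPos P₁ P₂ P₃ P₄ ↔ [P₁.1, P₂.1, P₃.1, P₄.1].Pairwise (· ≠ ·) ∧
      [P₁.2, P₂.2, P₃.2, P₄.2].Pairwise (· ≠ ·) ∧
      ∀ C : Matrix (Fin 2) (Fin 2) K, (∀ P ∈ [P₁, P₂, P₃, P₄], VanishesAt C P) → C = 0 := by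
  simp only [GenPos, vanishesAt_iff]
  refine and_congr_right' (and_congr_right' ⟨fun h C hC => ?_, fun h c₀₀ c₀₁ c₁₀ c₁₁ hc => ?_⟩)
  · obtain ⟨h₀₀, h₀₁, h₁₀, h₁₁⟩ := h _ _ _ _ hC
    ext i j
    fin_cases i <;> fin_cases j <;> assumption
  · have := h !![c₀₀, c₀₁; c₁₀, c₁₁] (by simpa using hc)
    simpa [← Matrix.ext_iff, Fin.forall_fin_two, and_assoc] using this

lemma glMap_injective (A : GL (Fin 2) K) : Function.Injective (glMap A) :=
  Projectivization.map_injective _ _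

lemma GenPos.prodMap_glMap {P₁ P₂ P₃ P₄ : Pone K × Pone K} (h : GenPos P₁ P₂ P₃ P₄)
    (A B : GL (Fin 2) K) :
    let φ := Prod.map (glMap A) (glMap B)
    GenPos (φ P₁) (φ P₂) (φ P₃) (φ P₄) := by
  rw [genPos_iff] at h ⊢
  obtain ⟨h₁, h₂, hC⟩ := h
  refine ⟨h₁.map (glMap A) fun _ _ => (glMap_injective A).ne,
    h₂.map (glMap B) fun _ _ => (glMap_injective B).ne, fun C hC' => ?_⟩
  have hACB := hC _ fun P hP => (vanishesAt_prodMap_glMap_iff A B C P).mp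
    (hC' _ (List.mem_map_of_mem hP))
  calc C = ((A⁻¹ : GL (Fin 2) K) : Matrix (Fin 2) (Fin 2) K)ᵀ *
        ((A : Matrix (Fin 2) (Fin 2) K)ᵀ * C * B) *
          ((B⁻¹ : GL (Fin 2) K) : Matrix (Fin 2) (Fin 2) K) := by
        simp [← mul_assoc, ← transpose_mul]
    _ = 0 := by rw [hACB]; simp

lemma ne_zero_and_mul_ne_one_of_genPos {μ ν : K}
    (h : GenPos (pt 1 0 (Or.inl one_ne_zero), pt 1 0 (Or.inl one_ne_zero))
      (pt 0 1 (Or.inr one_ne_zero), pt 0 1 (Or.inr one_ne_zero))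
      (pt 1 1 (Or.inl one_ne_zero), pt μ 1 (Or.inr one_ne_zero))
      (pt ν 1 (Or.inr one_ne_zero), pt 1 1 (Or.inl one_ne_zero))) :
    μ ≠ 0 ∧ μ * ν ≠ 1 := by
  rw [genPos_iff] at h
  obtain ⟨-, h₂, hC⟩ := h
  refine ⟨?_, fun hμν => ?_⟩
  · rintro rfl
    simp at h₂
  · have := hC !![0, -μ; 1, 0] (by simp [vanishesAt_pt_iff, hμν])
    simpa using congrFun₂ this 1 0

end Field

lemma conjP1_mk (v : Fin 2 → ℂ) (hv : v ≠ 0) :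
    conjP1 (Projectivization.mk ℂ v hv) =
      Projectivization.mk ℂ (fun i => conj (v i)) (by simpa [funext_iff] using hv) := by
  obtain ⟨a, ha⟩ := Projectivization.exists_smul_eq_mk_rep ℂ v hv
  rw [conjP1, Projectivization.mk_eq_mk_iff']
  exact ⟨conj (a : ℂ), by ext i; simp [← ha, Units.smul_def]⟩

lemma conjP1_pt (a b : ℂ) (h : a ≠ 0 ∨ b ≠ 0) :
    conjP1 (pt a b h) = pt (conj a) (conj b) (by simpa using h) := by
  rw [pt, conjP1_mk, pt]
  congr 1
  ext i; fin_cases i <;> rfl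

lemma coe_conjGL (A : GL (Fin 2) ℂ) :
    (conjGL A : Matrix (Fin 2) (Fin 2) ℂ) = (A : Matrix (Fin 2) (Fin 2) ℂ).map conj :=
  rfl

lemma conjGL_conjGL (A : GL (Fin 2) ℂ) : conjGL (conjGL A) = A := by
  ext i j
  simp [coe_conjGL]

lemma conjP1_glMap (A : GL (Fin 2) ℂ) (x : Pone ℂ) :
    conjP1 (glMap A x) = glMap (conjGL A) (conjP1 x) := by
  induction x using Projectivization.ind with | h v hv => ?_
  rw [glMap_mk, conjP1_mk, conjP1_mk, glMap_mk]
  congr 1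
  ext i
  simp [mulVec, dotProduct, coe_conjGL]

lemma sigmaQ_phiA (A : GL (Fin 2) ℂ) (P : Pone ℂ × Pone ℂ) :
    sigmaQ (phiA A P) = phiA A (sigmaQ P) := by
  simp [sigmaQ, phiA, conjP1_glMap, conjGL_conjGL]

lemma phiA_of_sigmaQ_eq {P : Pone ℂ × Pone ℂ} (hP : sigmaQ P = P) (A : GL (Fin 2) ℂ) :
    phiA A P = (glMap A P.1, conjP1 (glMap A P.1)) := by
  have hP₂ : conjP1 P.1 = P.2 := congrArg Prod.snd hP
  rw [conjP1_glMap, hP₂]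
  rfl

/-- Let `p`, `q` be `σ`-fixed points and `r` a point of `ℙ¹(ℂ) × ℙ¹(ℂ)` such
that `p, q, r, σ(r)` are in general position. Then there are `A ∈ GL₂(ℂ)` and
`μ ∈ ℂ ∖ {0, 1, −1}` such that `φ_A : (x,y) ↦ (A·x, Ā·y)` maps `p` to `([1:0],[1:0])`,
`q` to `([0:1],[0:1])` and `r` to `([1:1],[μ:1])`. -/
theorem statement1 (p q r : Pone ℂ × Pone ℂ)
    (hp : sigmaQ p = p) (hq : sigmaQ q = q)
    (hgen : GenPos p q r (sigmaQ r)) :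
    ∃ (A : GL (Fin 2) ℂ) (μ : ℂ), μ ≠ 0 ∧ μ ≠ 1 ∧ μ ≠ -1 ∧
      phiA A p = (pt 1 0 (Or.inl one_ne_zero), pt 1 0 (Or.inl one_ne_zero)) ∧
      phiA A q = (pt 0 1 (Or.inr one_ne_zero), pt 0 1 (Or.inr one_ne_zero)) ∧
      phiA A r = (pt 1 1 (Or.inl one_ne_zero), pt μ 1 (Or.inr one_ne_zero)) := by
  obtain ⟨hpq, hpr, -, hqr, -, -⟩ := List.pairwise_ne_four_iff.mp hgen.1
  obtain ⟨A, hAp, hAq, hAr⟩ := exists_glMap_eq_inf_zero_one hpq hpr hqr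
  have hp' : phiA A p = (pt 1 0 (Or.inl one_ne_zero), pt 1 0 (Or.inl one_ne_zero)) := by
    simp [phiA_of_sigmaQ_eq hp, hAp, conjP1_pt]
  have hq' : phiA A q = (pt 0 1 (Or.inr one_ne_zero), pt 0 1 (Or.inr one_ne_zero)) := by
    simp [phiA_of_sigmaQ_eq hq, hAq, conjP1_pt]
  have hgen' : GenPos (phiA A p) (phiA A q) (phiA A r) (sigmaQ (phiA A r)) := by
    rw [sigmaQ_phiA]
    exact hgen.prodMap_glMap A (conjGL A)
  have hpr' := (List.pairwise_ne_four_iff.mp hgen'.2.1).2.1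
  rw [hp'] at hpr'
  obtain ⟨μ, hμ⟩ := exists_eq_pt_one hpr'.symm
  have hr' : phiA A r = (pt 1 1 (Or.inl one_ne_zero), pt μ 1 (Or.inr one_ne_zero)) :=
    Prod.ext hAr hμ
  rw [hp', hq', hr'] at hgen'
  simp only [sigmaQ, conjP1_pt, map_one] at hgen'
  obtain ⟨hμ0, hμμ⟩ := ne_zero_and_mul_ne_one_of_genPos hgen'
  refine ⟨A, μ, hμ0, ?_, ?_, hp', hq', hr'⟩ <;> rintro rfl <;> simp at hμμ
end
end

section
/- Let μ ∈ ℂ∖{0,1,−1} and set p = ([1:0],[1:0]), q = ([0:1],[0:1]), r = ([1:1],[μ:1]) and r̄ = ([μ̄:1],[1:1]) in ℙ¹(ℂ)×ℙ¹(ℂ). There exists A ∈ GL₂(ℂ) such that the map δ_A : (x,y) ↦ (Ā·y, A·x) satisfies δ_A(p) = p, δ_A(q) = q, δ_A(r) = r̄ and δ_A(r̄) = r, if and only if μ ∈ ℝ. -/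
noncomputable section

open ComplexConjugate

/-- The ruling-exchanging map `δ_A : (x, y) ↦ (Ā·y, A·x)` of `ℙ¹(ℂ) × ℙ¹(ℂ)`. -/
def deltaA (A : GL (Fin 2) ℂ) (P : Pone ℂ × Pone ℂ) : Pone ℂ × Pone ℂ :=
  (glMap (conjGL A) P.2, glMap A P.1)

/-- The point `[1 : 0]` of `ℙ¹(ℂ)`. -/
def P10 : Pone ℂ := pt 1 0 (Or.inl one_ne_zero)

/-- The point `[0 : 1]` of `ℙ¹(ℂ)`. -/
def P01 : Pone ℂ := pt 0 1 (Or.inr one_ne_zero)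

/-- The point `[1 : 1]` of `ℙ¹(ℂ)`. -/
def P11 : Pone ℂ := pt 1 1 (Or.inl one_ne_zero)

/-- The point `[a : 1]` of `ℙ¹(ℂ)`. -/
def Pa (a : ℂ) : Pone ℂ := pt a 1 (Or.inr one_ne_zero)

theorem glMap_pt {K : Type} [Field K] (A : GL (Fin 2) K) (a b : K) (h : a ≠ 0 ∨ b ≠ 0) :
    glMap A (pt a b h) = Projectivization.mk K
      ((A : Matrix (Fin 2) (Fin 2) K).mulVec ![a, b])
      (by
        have := (Matrix.mulVecLin (A : Matrix (Fin 2) (Fin 2) K)).map_zero ▸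
          (mulVecLin_injective A).ne (vec_ne_zero h)
        simpa [Matrix.mulVecLin_apply] using this) := by
  rw [glMap, pt, Projectivization.map_mk]
  simp [Matrix.mulVecLin_apply]

theorem glMap_pt_eq_pt {K : Type} [Field K] (A : GL (Fin 2) K) (a b c d : K)
    (h : a ≠ 0 ∨ b ≠ 0) (h' : c ≠ 0 ∨ d ≠ 0) :
    glMap A (pt a b h) = pt c d h' ↔ ∃ t : Kˣ,
      (A : Matrix (Fin 2) (Fin 2) K) 0 0 * a + (A : Matrix (Fin 2) (Fin 2) K) 0 1 * b = t * c ∧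
      (A : Matrix (Fin 2) (Fin 2) K) 1 0 * a + (A : Matrix (Fin 2) (Fin 2) K) 1 1 * b = t * d := by
  rw [glMap_pt, pt, Projectivization.mk_eq_mk_iff]
  constructor
  · rintro ⟨t, ht⟩
    refine ⟨t, ?_, ?_⟩
    · have := congrFun ht 0
      simp [Matrix.mulVec, dotProduct, Fin.sum_univ_two] at this
      rw [← this, Units.smul_def, smul_eq_mul]
    · have := congrFun ht 1
      simp [Matrix.mulVec, dotProduct, Fin.sum_univ_two] at this
      rw [← this, Units.smul_def, smul_eq_mul]
  · rintro ⟨t, ht0, ht1⟩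
    refine ⟨t, ?_⟩
    funext i
    fin_cases i <;>
      simp only [Units.smul_def, smul_eq_mul, Pi.smul_apply, Fin.mk_zero, Fin.mk_one,
        Matrix.cons_val_zero, Matrix.cons_val_one, Matrix.head_cons, Matrix.mulVec,
        dotProduct, Fin.sum_univ_two]
    · exact ht0.symm
    · exact ht1.symm

theorem conjGL_apply (A : GL (Fin 2) ℂ) (i j : Fin 2) :
    ((conjGL A : GL (Fin 2) ℂ) : Matrix (Fin 2) (Fin 2) ℂ) i j
      = conj ((A : Matrix (Fin 2) (Fin 2) ℂ) i j) := by
  simp [conjGL]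

theorem glMap_one {K : Type} [Field K] (x : Pone K) : glMap (1 : GL (Fin 2) K) x = x := by
  induction x using Projectivization.ind with
  | h v hv =>
    rw [glMap, Projectivization.map_mk]
    apply (Projectivization.mk_eq_mk_iff K _ _ _ hv).mpr
    exact ⟨1, by simp [Matrix.mulVecLin_apply, Matrix.one_mulVec]⟩

/-- Let `μ ∈ ℂ ∖ {0, 1, −1}` and set `p = ([1:0],[1:0])`,
`q = ([0:1],[0:1])`, `r = ([1:1],[μ:1])`, `r̄ = ([μ̄:1],[1:1])`. There exists `A ∈ GL₂(ℂ)`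
such that `δ_A : (x,y) ↦ (Ā·y, A·x)` satisfies `δ_A(p) = p`, `δ_A(q) = q`, `δ_A(r) = r̄` and
`δ_A(r̄) = r`, if and only if `μ ∈ ℝ`. -/
theorem statement5 (μ : ℂ) (h0 : μ ≠ 0) (h1 : μ ≠ 1) (h2 : μ ≠ -1) :
    (∃ A : GL (Fin 2) ℂ,
        deltaA A (P10, P10) = (P10, P10) ∧
        deltaA A (P01, P01) = (P01, P01) ∧
        deltaA A (P11, Pa μ) = (Pa (conj μ), P11) ∧
        deltaA A (Pa (conj μ), P11) = (P11, Pa μ))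
      ↔ μ.im = 0 := by
  constructor
  · rintro ⟨A, hp, hq, hr, -⟩
    have hp2 : glMap A P10 = P10 := congrArg Prod.snd hp
    have hq2 : glMap A P01 = P01 := congrArg Prod.snd hq
    have hr2 : glMap A P11 = P11 := congrArg Prod.snd hr
    have hr1 : glMap (conjGL A) (Pa μ) = Pa (conj μ) := congrArg Prod.fst hr
    rw [P10, glMap_pt_eq_pt] at hp2
    rw [P01, glMap_pt_eq_pt] at hq2
    rw [P11, glMap_pt_eq_pt] at hr2
    rw [Pa, Pa, glMap_pt_eq_pt] at hr1
    obtain ⟨s, hs0, hs1⟩ := hp2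
    obtain ⟨t, ht0, ht1⟩ := hq2
    obtain ⟨u, hu0, hu1⟩ := hr2
    obtain ⟨w, hw0, hw1⟩ := hr1
    simp only [mul_one, mul_zero, add_zero, zero_add, conjGL_apply] at *
    have hd : (A : Matrix (Fin 2) (Fin 2) ℂ) 0 0 = (A : Matrix (Fin 2) (Fin 2) ℂ) 1 1 := by
      have h3 : (A : Matrix (Fin 2) (Fin 2) ℂ) 0 0 + (A : Matrix (Fin 2) (Fin 2) ℂ) 0 1
          = (A : Matrix (Fin 2) (Fin 2) ℂ) 1 0 + (A : Matrix (Fin 2) (Fin 2) ℂ) 1 1 := by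
        rw [hu0, hu1]
      rw [hs1, ht0, add_zero, zero_add] at h3
      exact h3
    have hw1' : conj ((A : Matrix (Fin 2) (Fin 2) ℂ) 1 1) = (w : ℂ) := by
      rw [← hw1, hs1]; simp
    have key : (w : ℂ) * μ = (w : ℂ) * conj μ := by
      simp only [ht0, hd, hw1', map_zero, add_zero] at hw0
      exact hw0
    have hμ : μ = conj μ := mul_left_cancel₀ w.ne_zero key
    have := congrArg Complex.im hμ
    simp only [Complex.conj_im] at this
    linarith
  · intro him
    have hμ : conj μ = μ := Complex.conj_eq_iff_im.mpr him
    refine ⟨1, ?_, ?_, ?_, ?_⟩ <;>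
      simp [deltaA, conjGL, map_one, glMap_one, hμ]
end
end

section
/- Let λ ∈ ℂ∖ℝ. There exists A ∈ GL₂(ℂ) whose action on ℙ¹(ℂ) satisfies A·[1:0] = [1:0], A·[0:1] = [1:1], A·[1:1] = [λ:1] and A·[λ:1] = [0:1], if and only if λ² − λ + 1 = 0, i.e. if and only if λ = e^{iπ/3} or λ = e^{−iπ/3}. -/
/-!
A matrix fixing `[1:0]` acts on the affine chart as `z ↦ αz + β`; sending `0 ↦ 1 ↦ λ` forces
`z ↦ (λ - 1)z + 1`, and the last condition `λ ↦ 0` then reads `λ² - λ + 1 = 0`. The roots of this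
polynomial are `e^{±iπ/3}`, since their product is `1` and their sum is `2 cos(π/3) = 1`.
-/

noncomputable section

open ComplexConjugate

open Matrix

lemma mulVecLin_fin_two {K : Type} [Field K] (M : Matrix (Fin 2) (Fin 2) K) (a b : K) :
    M.mulVecLin ![a, b] = ![M 0 0 * a + M 0 1 * b, M 1 0 * a + M 1 1 * b] := by
  ext i
  fin_cases i <;> simp [mulVec, dotProduct, Fin.sum_univ_two]

lemma glMap_pt_eq_pt_iff {K : Type} [Field K] (A : GL (Fin 2) K) {a b c d : K}
    (h : a ≠ 0 ∨ b ≠ 0) (h' : c ≠ 0 ∨ d ≠ 0) :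
    glMap A (pt a b h) = pt c d h' ↔ ∃ t : Kˣ,
      t * c = (A : Matrix (Fin 2) (Fin 2) K) 0 0 * a + (A : Matrix (Fin 2) (Fin 2) K) 0 1 * b ∧
      t * d = (A : Matrix (Fin 2) (Fin 2) K) 1 0 * a + (A : Matrix (Fin 2) (Fin 2) K) 1 1 * b := by
  rw [glMap, pt, pt, Projectivization.map_mk, Projectivization.mk_eq_mk_iff, mulVecLin_fin_two]
  simp only [funext_iff, Fin.forall_fin_two, Units.smul_def, Pi.smul_apply,
    cons_val_zero, cons_val_one, smul_eq_mul]

theorem exists_glMap_cycle_iff {K : Type} [Field K] (lam : K) :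
    (∃ A : GL (Fin 2) K,
        glMap A (pt 1 0 (Or.inl one_ne_zero)) = pt 1 0 (Or.inl one_ne_zero) ∧
        glMap A (pt 0 1 (Or.inr one_ne_zero)) = pt 1 1 (Or.inl one_ne_zero) ∧
        glMap A (pt 1 1 (Or.inl one_ne_zero)) = pt lam 1 (Or.inr one_ne_zero) ∧
        glMap A (pt lam 1 (Or.inr one_ne_zero)) = pt 0 1 (Or.inr one_ne_zero)) ↔
      lam ^ 2 - lam + 1 = 0 := by
  simp only [glMap_pt_eq_pt_iff]
  constructor
  · rintro ⟨A, ⟨t₁, h₁₁, h₁₂⟩, ⟨t₂, h₂₁, h₂₂⟩, ⟨t₃, h₃₁, h₃₂⟩, ⟨t₄, h₄₁, h₄₂⟩⟩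
    -- writing `s = A 1 1 = t₂`, the conditions force `A = s • !![λ - 1, 1; 0, 1]`
    have hs : (t₂ : K) * (lam ^ 2 - lam + 1) = 0 := by
      linear_combination -h₄₁ + lam * h₃₁ - lam ^ 2 * h₃₂ + lam ^ 2 * h₁₂ + lam ^ 2 * h₂₂
        + (1 - lam) * h₂₁
    exact (mul_eq_zero.1 hs).resolve_left t₂.ne_zero
  · intro hq
    have hlam : lam - 1 ≠ 0 := fun h => by
      simp [sub_eq_zero.1 h] at hq
    have hdet : (!![lam - 1, 1; 0, 1] : Matrix (Fin 2) (Fin 2) K).det ≠ 0 := by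
      simpa [det_fin_two_of] using hlam
    refine ⟨GeneralLinearGroup.mkOfDetNeZero _ hdet, ⟨Units.mk0 _ hlam, ?_⟩, ⟨1, ?_⟩, ⟨1, ?_⟩,
      ⟨1, ?_⟩⟩ <;> simp
    linear_combination -hq

lemma sq_sub_add_one_eq_mul_sub_exp (z : ℂ) :
    z ^ 2 - z + 1 = (z - Complex.exp (Complex.I * Real.pi / 3)) *
      (z - Complex.exp (-(Complex.I * Real.pi / 3))) := by
  have hprod : Complex.exp (Complex.I * Real.pi / 3) * Complex.exp (-(Complex.I * Real.pi / 3))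
      = 1 := by
    rw [← Complex.exp_add, add_neg_cancel, Complex.exp_zero]
  have hsum : Complex.exp (Complex.I * Real.pi / 3) + Complex.exp (-(Complex.I * Real.pi / 3))
      = 1 := by
    have harg : Complex.I * Real.pi / 3 = ((Real.pi / 3 : ℝ) : ℂ) * Complex.I := by
      push_cast; ring
    rw [harg, ← neg_mul, ← Complex.two_cos, ← Complex.ofReal_cos, Real.cos_pi_div_three]
    norm_num
  linear_combination z * hsum - hprod

theorem statement7_general (lam : ℂ) :
    ((∃ A : GL (Fin 2) ℂ,
        glMap A P10 = P10 ∧ glMap A P01 = P11 ∧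
        glMap A P11 = Pa lam ∧ glMap A (Pa lam) = P01)
      ↔ lam ^ 2 - lam + 1 = 0) ∧
    (lam ^ 2 - lam + 1 = 0 ↔
      (lam = Complex.exp (Complex.I * (Real.pi : ℂ) / 3) ∨
        lam = Complex.exp (-(Complex.I * (Real.pi : ℂ) / 3)))) := by
  refine ⟨exists_glMap_cycle_iff lam, ?_⟩
  rw [sq_sub_add_one_eq_mul_sub_exp, mul_eq_zero, sub_eq_zero, sub_eq_zero]

/-- Let `λ ∈ ℂ ∖ ℝ`. There exists `A ∈ GL₂(ℂ)` whose action on `ℙ¹(ℂ)`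
satisfies `A·[1:0] = [1:0]`, `A·[0:1] = [1:1]`, `A·[1:1] = [λ:1]` and `A·[λ:1] = [0:1]`, if
and only if `λ² − λ + 1 = 0`, i.e. if and only if `λ = e^{iπ/3}` or `λ = e^{−iπ/3}`. -/
theorem statement7 (lam : ℂ) (hl : lam.im ≠ 0) :
    ((∃ A : GL (Fin 2) ℂ,
        glMap A P10 = P10 ∧ glMap A P01 = P11 ∧
        glMap A P11 = Pa lam ∧ glMap A (Pa lam) = P01)
      ↔ lam ^ 2 - lam + 1 = 0) ∧
    (lam ^ 2 - lam + 1 = 0 ↔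
      (lam = Complex.exp (Complex.I * (Real.pi : ℂ) / 3) ∨
        lam = Complex.exp (-(Complex.I * (Real.pi : ℂ) / 3)))) :=
  statement7_general lam
end
end

section
/- Let μ₁, μ₂ ∈ ℝ∖{0,1} with μ₁ ≠ μ₂, and set p = ([1:0],[1:0]), q = ([0:1],[0:1]), r = ([1:1],[1:1]), s = ([1:μ₁],[1:μ₂]) in ℙ¹(ℝ)×ℙ¹(ℝ). There exist A, B ∈ GL₂(ℝ) such that the map δ : (x,y) ↦ (B·y, A·x) satisfies δ(p) = p, δ(r) = r, δ(q) = s and δ(s) = q, if and only if μ₁ + μ₂ = 1. When it exists, one can take A = [[μ₂−1, 1],[0, μ₂]] and B = [[μ₁−1, 1],[0, μ₁]]. -/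
noncomputable section

open ComplexConjugate

/-- The point `[1 : 0]` of `ℙ¹(ℝ)`. -/
def R10 : Pone ℝ := pt 1 0 (Or.inl one_ne_zero)

/-- The point `[0 : 1]` of `ℙ¹(ℝ)`. -/
def R01 : Pone ℝ := pt 0 1 (Or.inr one_ne_zero)

/-- The point `[1 : 1]` of `ℙ¹(ℝ)`. -/
def R11 : Pone ℝ := pt 1 1 (Or.inl one_ne_zero)

/-- The point `[1 : b]` of `ℙ¹(ℝ)`. -/
def Rb (b : ℝ) : Pone ℝ := pt 1 b (Or.inl one_ne_zero)

/-- The ruling-exchanging map `δ : (x, y) ↦ (B·y, A·x)` of `ℙ¹(ℝ) × ℙ¹(ℝ)`. -/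
def deltaAB (A B : GL (Fin 2) ℝ) (P : Pone ℝ × Pone ℝ) : Pone ℝ × Pone ℝ :=
  (glMap B P.2, glMap A P.1)

lemma glMap_pt_eq (A : GL (Fin 2) ℝ) {a b c d : ℝ} (h : a ≠ 0 ∨ b ≠ 0) (h' : c ≠ 0 ∨ d ≠ 0) :
    glMap A (pt a b h) = pt c d h' ↔
    ∃ t : ℝˣ,
      (t : ℝ) * c = (A : Matrix (Fin 2) (Fin 2) ℝ) 0 0 * a + (A : Matrix (Fin 2) (Fin 2) ℝ) 0 1 * b ∧
      (t : ℝ) * d = (A : Matrix (Fin 2) (Fin 2) ℝ) 1 0 * a + (A : Matrix (Fin 2) (Fin 2) ℝ) 1 1 * b := by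
  unfold glMap pt
  rw [Projectivization.map_mk, Projectivization.mk_eq_mk_iff]
  apply exists_congr
  intro t
  rw [funext_iff, Fin.forall_fin_two]
  simp [Matrix.mulVecLin_apply, Matrix.mulVec, dotProduct, Fin.sum_univ_two,
    Units.smul_def, smul_eq_mul]

/-- Forward: one matrix satisfying the four conditions forces μ + ν = 1. -/
lemma forced (A : GL (Fin 2) ℝ) (μ ν : ℝ)
    (e1 : glMap A R10 = R10) (e2 : glMap A R11 = R11)
    (e3 : glMap A R01 = Rb ν) (e4 : glMap A (Rb μ) = R01) :
    μ + ν = 1 := by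
  rw [show R10 = pt 1 0 (Or.inl one_ne_zero) from rfl] at e1
  rw [show R11 = pt 1 1 (Or.inl one_ne_zero) from rfl] at e2
  rw [show R01 = pt 0 1 (Or.inr one_ne_zero) from rfl] at e3 e4
  rw [show Rb ν = pt 1 ν (Or.inl one_ne_zero) from rfl] at e3
  rw [show Rb μ = pt 1 μ (Or.inl one_ne_zero) from rfl] at e4
  rw [glMap_pt_eq] at e1 e2 e3 e4
  obtain ⟨t, ht1, ht2⟩ := e1
  obtain ⟨u, hu1, hu2⟩ := e2
  obtain ⟨v, hv1, hv2⟩ := e3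
  obtain ⟨w, hw1, hw2⟩ := e4
  set a := (A : Matrix (Fin 2) (Fin 2) ℝ) 0 0
  set b := (A : Matrix (Fin 2) (Fin 2) ℝ) 0 1
  set c := (A : Matrix (Fin 2) (Fin 2) ℝ) 1 0
  set d := (A : Matrix (Fin 2) (Fin 2) ℝ) 1 1
  have hvne : (v : ℝ) ≠ 0 := v.ne_zero
  -- from e1: c = 0; e3: b = v, d = v ν; e2: a + b = c + d; e4: a + μ b = 0
  have hc : c = 0 := by linarith [ht2]
  have hb : b = v := by linarith [hv1]
  have hd : d = (v : ℝ) * ν := by linarith [hv2]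
  have hud : a + b = c + d := by linarith [hu1, hu2]
  have ha : a + μ * b = 0 := by linarith [hw1]
  have : (v : ℝ) * (μ + ν - 1) = 0 := by linear_combination -μ*hb - hd + hb + ha - hud - hc
  have := mul_eq_zero.mp this
  rcases this with h | h
  · exact absurd h hvne
  · linarith

/-- Construction: the explicit triangular matrix works. -/
lemma works (μ ν : ℝ) (hμ0 : μ ≠ 0) (hν0 : ν ≠ 0) (hν1 : ν ≠ 1) (hsum : μ + ν = 1)
    (A : GL (Fin 2) ℝ) (hA : (A : Matrix (Fin 2) (Fin 2) ℝ) = !![ν - 1, 1; 0, ν]) :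
    glMap A R10 = R10 ∧ glMap A R11 = R11 ∧ glMap A R01 = Rb ν ∧ glMap A (Rb μ) = R01 := by
  have h00 : (A : Matrix (Fin 2) (Fin 2) ℝ) 0 0 = ν - 1 := by rw [hA]; norm_num
  have h01 : (A : Matrix (Fin 2) (Fin 2) ℝ) 0 1 = 1 := by rw [hA]; norm_num
  have h10 : (A : Matrix (Fin 2) (Fin 2) ℝ) 1 0 = 0 := by rw [hA]; norm_num
  have h11 : (A : Matrix (Fin 2) (Fin 2) ℝ) 1 1 = ν := by rw [hA]; norm_num
  refine ⟨?_, ?_, ?_, ?_⟩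
  · rw [show R10 = pt 1 0 (Or.inl one_ne_zero) from rfl, glMap_pt_eq]
    exact ⟨Units.mk0 (ν - 1) (sub_ne_zero.mpr hν1), by rw [h00, h01, Units.val_mk0]; ring,
      by rw [h10, h11, Units.val_mk0]; ring⟩
  · rw [show R11 = pt 1 1 (Or.inl one_ne_zero) from rfl, glMap_pt_eq]
    exact ⟨Units.mk0 ν hν0, by rw [h00, h01]; push_cast [Units.val_mk0]; ring,
      by rw [h10, h11]; push_cast [Units.val_mk0]; ring⟩
  · rw [show R01 = pt 0 1 (Or.inr one_ne_zero) from rfl,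
      show Rb ν = pt 1 ν (Or.inl one_ne_zero) from rfl, glMap_pt_eq]
    exact ⟨1, by rw [h00, h01]; norm_num, by rw [h10, h11]; norm_num⟩
  · rw [show R01 = pt 0 1 (Or.inr one_ne_zero) from rfl,
      show Rb μ = pt 1 μ (Or.inl one_ne_zero) from rfl, glMap_pt_eq]
    refine ⟨Units.mk0 (μ * ν) (mul_ne_zero hμ0 hν0), ?_, ?_⟩
    · rw [h00, h01]; push_cast [Units.val_mk0]; linarith
    · rw [h10, h11]; push_cast [Units.val_mk0]; ring


/-- Let `μ₁, μ₂ ∈ ℝ ∖ {0,1}` with `μ₁ ≠ μ₂`, and set `p = ([1:0],[1:0])`,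
`q = ([0:1],[0:1])`, `r = ([1:1],[1:1])`, `s = ([1:μ₁],[1:μ₂])` in `ℙ¹(ℝ) × ℙ¹(ℝ)`. There
exist `A, B ∈ GL₂(ℝ)` such that `δ : (x,y) ↦ (B·y, A·x)` satisfies `δ(p) = p`, `δ(r) = r`,
`δ(q) = s` and `δ(s) = q`, if and only if `μ₁ + μ₂ = 1`. When it exists, one can take
`A = [[μ₂−1, 1],[0, μ₂]]` and `B = [[μ₁−1, 1],[0, μ₁]]`. -/
theorem statement11 (μ₁ μ₂ : ℝ)
    (h10 : μ₁ ≠ 0) (h11 : μ₁ ≠ 1) (h20 : μ₂ ≠ 0) (h21 : μ₂ ≠ 1) (hne : μ₁ ≠ μ₂) :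
    ((∃ A B : GL (Fin 2) ℝ,
        deltaAB A B (R10, R10) = (R10, R10) ∧
        deltaAB A B (R11, R11) = (R11, R11) ∧
        deltaAB A B (R01, R01) = (Rb μ₁, Rb μ₂) ∧
        deltaAB A B (Rb μ₁, Rb μ₂) = (R01, R01))
      ↔ μ₁ + μ₂ = 1) ∧
    (μ₁ + μ₂ = 1 →
      ∃ A B : GL (Fin 2) ℝ,
        (A : Matrix (Fin 2) (Fin 2) ℝ) = !![μ₂ - 1, 1; 0, μ₂] ∧
        (B : Matrix (Fin 2) (Fin 2) ℝ) = !![μ₁ - 1, 1; 0, μ₁] ∧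
        deltaAB A B (R10, R10) = (R10, R10) ∧
        deltaAB A B (R11, R11) = (R11, R11) ∧
        deltaAB A B (R01, R01) = (Rb μ₁, Rb μ₂) ∧
        deltaAB A B (Rb μ₁, Rb μ₂) = (R01, R01)) := by
  have construct : μ₁ + μ₂ = 1 →
      ∃ A B : GL (Fin 2) ℝ,
        (A : Matrix (Fin 2) (Fin 2) ℝ) = !![μ₂ - 1, 1; 0, μ₂] ∧
        (B : Matrix (Fin 2) (Fin 2) ℝ) = !![μ₁ - 1, 1; 0, μ₁] ∧
        deltaAB A B (R10, R10) = (R10, R10) ∧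
        deltaAB A B (R11, R11) = (R11, R11) ∧
        deltaAB A B (R01, R01) = (Rb μ₁, Rb μ₂) ∧
        deltaAB A B (Rb μ₁, Rb μ₂) = (R01, R01) := by
    intro hsum
    have hdetA : Matrix.det !![μ₂ - 1, 1; 0, μ₂] ≠ 0 := by
      rw [Matrix.det_fin_two_of]
      simp only [mul_zero, sub_zero]
      exact mul_ne_zero (sub_ne_zero.mpr h21) h20
    have hdetB : Matrix.det !![μ₁ - 1, 1; 0, μ₁] ≠ 0 := by
      rw [Matrix.det_fin_two_of]
      simp only [mul_zero, sub_zero]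
      exact mul_ne_zero (sub_ne_zero.mpr h11) h10
    set A := Matrix.GeneralLinearGroup.mkOfDetNeZero _ hdetA with hAdef
    set B := Matrix.GeneralLinearGroup.mkOfDetNeZero _ hdetB with hBdef
    have hA : (A : Matrix (Fin 2) (Fin 2) ℝ) = !![μ₂ - 1, 1; 0, μ₂] := rfl
    have hB : (B : Matrix (Fin 2) (Fin 2) ℝ) = !![μ₁ - 1, 1; 0, μ₁] := rfl
    refine ⟨A, B, hA, hB, ?_⟩
    obtain ⟨a1, a2, a3, a4⟩ := works μ₁ μ₂ h10 h20 h21 hsum A hA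
    obtain ⟨b1, b2, b3, b4⟩ := works μ₂ μ₁ h20 h10 h11 (by linarith) B hB
    refine ⟨?_, ?_, ?_, ?_⟩ <;> simp only [deltaAB, Prod.mk.injEq] <;>
      exact ⟨by assumption, by assumption⟩
  refine ⟨⟨?_, fun hsum => ?_⟩, construct⟩
  · rintro ⟨A, B, e1, e2, e3, e4⟩
    simp only [deltaAB, Prod.mk.injEq] at e1 e2 e3 e4
    exact forced A μ₁ μ₂ e1.2 e2.2 e3.2 e4.2
  · obtain ⟨A, B, _, _, c1, c2, c3, c4⟩ := construct hsum
    exact ⟨A, B, c1, c2, c3, c4⟩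
end
end

section
/- Let μ₁, μ₂ ∈ ℝ∖{0,1} with μ₁ ≠ μ₂, and set p = ([1:0],[1:0]), q = ([0:1],[0:1]), r = ([1:1],[1:1]), s = ([1:μ₁],[1:μ₂]) in ℙ¹(ℝ)×ℙ¹(ℝ). There exist A, B ∈ GL₂(ℝ) such that the map δ : (x,y) ↦ (B·y, A·x) satisfies δ(p) = p, δ(s) = s, δ(q) = r and δ(r) = q, if and only if μ₁ + μ₂ − μ₁μ₂ = 0. -/
noncomputable section

open ComplexConjugate

lemma glMap_pt_eq_iff (A : GL (Fin 2) ℝ) (a b c d : ℝ) (h1 : a ≠ 0 ∨ b ≠ 0)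
    (h2 : c ≠ 0 ∨ d ≠ 0) :
    glMap A (pt a b h1) = pt c d h2 ↔
      ∃ u : ℝˣ, (u : ℝ) * c = (A : Matrix (Fin 2) (Fin 2) ℝ) 0 0 * a
          + (A : Matrix (Fin 2) (Fin 2) ℝ) 0 1 * b ∧
        (u : ℝ) * d = (A : Matrix (Fin 2) (Fin 2) ℝ) 1 0 * a
          + (A : Matrix (Fin 2) (Fin 2) ℝ) 1 1 * b := by
  rw [glMap, pt, pt, Projectivization.map_mk, Projectivization.mk_eq_mk_iff]
  constructor
  · rintro ⟨u, hu⟩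
    refine ⟨u, ?_, ?_⟩
    · have := congrFun hu 0
      simpa [Matrix.mulVec, dotProduct, Fin.sum_univ_two, Units.smul_def, smul_eq_mul] using this
    · have := congrFun hu 1
      simpa [Matrix.mulVec, dotProduct, Fin.sum_univ_two, Units.smul_def, smul_eq_mul] using this
  · rintro ⟨u, hu0, hu1⟩
    refine ⟨u, ?_⟩
    funext i
    fin_cases i <;>
      simp [Matrix.mulVec, dotProduct, Fin.sum_univ_two, Units.smul_def, smul_eq_mul, ← hu0, ← hu1]

/-- Let `μ₁, μ₂ ∈ ℝ ∖ {0,1}` with `μ₁ ≠ μ₂`, and set `p = ([1:0],[1:0])`,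
`q = ([0:1],[0:1])`, `r = ([1:1],[1:1])`, `s = ([1:μ₁],[1:μ₂])` in `ℙ¹(ℝ) × ℙ¹(ℝ)`. There
exist `A, B ∈ GL₂(ℝ)` such that `δ : (x,y) ↦ (B·y, A·x)` satisfies `δ(p) = p`, `δ(s) = s`,
`δ(q) = r` and `δ(r) = q`, if and only if `μ₁ + μ₂ − μ₁μ₂ = 0`. -/
theorem statement12 (μ₁ μ₂ : ℝ)
    (h10 : μ₁ ≠ 0) (h11 : μ₁ ≠ 1) (h20 : μ₂ ≠ 0) (h21 : μ₂ ≠ 1) (hne : μ₁ ≠ μ₂) :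
    (∃ A B : GL (Fin 2) ℝ,
        deltaAB A B (R10, R10) = (R10, R10) ∧
        deltaAB A B (Rb μ₁, Rb μ₂) = (Rb μ₁, Rb μ₂) ∧
        deltaAB A B (R01, R01) = (R11, R11) ∧
        deltaAB A B (R11, R11) = (R01, R01))
      ↔ μ₁ + μ₂ - μ₁ * μ₂ = 0 := by
  constructor
  · rintro ⟨A, B, h1, h2, h3, h4⟩
    have p1 : glMap A R10 = R10 := congrArg Prod.snd h1
    have p2 : glMap A (Rb μ₁) = Rb μ₂ := congrArg Prod.snd h2
    have p3 : glMap A R01 = R11 := congrArg Prod.snd h3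
    have p4 : glMap A R11 = R01 := congrArg Prod.snd h4
    obtain ⟨u, hu0, hu1⟩ := (glMap_pt_eq_iff A 1 0 1 0 _ _).mp p1
    obtain ⟨t, ht0, ht1⟩ := (glMap_pt_eq_iff A 1 μ₁ 1 μ₂ _ _).mp p2
    obtain ⟨v, hv0, hv1⟩ := (glMap_pt_eq_iff A 0 1 1 1 _ _).mp p3
    obtain ⟨w, hw0, hw1⟩ := (glMap_pt_eq_iff A 1 1 0 1 _ _).mp p4
    simp only [mul_one, mul_zero, add_zero, zero_add] at hu0 hu1 ht0 ht1 hv0 hv1 hw0 hw1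
    set a := (A : Matrix (Fin 2) (Fin 2) ℝ) 0 0
    set b := (A : Matrix (Fin 2) (Fin 2) ℝ) 0 1
    set c := (A : Matrix (Fin 2) (Fin 2) ℝ) 1 0
    set d := (A : Matrix (Fin 2) (Fin 2) ℝ) 1 1
    have hb : b ≠ 0 := by rw [← hv0]; exact v.ne_zero
    have key : b * (μ₁ + μ₂ - μ₁ * μ₂) = 0 := by
      linear_combination μ₂ * ht0 - ht1 - μ₂ * hw0 + μ₁ * hv1 - μ₁ * hv0 + hu1
    rcases mul_eq_zero.mp key with h | h
    · exact absurd h hb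
    · exact h
  · intro hμ
    have hMM : (!![(-1 : ℝ), 1; 0, 1]) * (!![(-1 : ℝ), 1; 0, 1]) = 1 := by
      rw [Matrix.one_fin_two]; norm_num [Matrix.mul_fin_two]
    set A : GL (Fin 2) ℝ := ⟨!![(-1 : ℝ), 1; 0, 1], !![(-1 : ℝ), 1; 0, 1], hMM, hMM⟩ with hA
    have e00 : (A : Matrix (Fin 2) (Fin 2) ℝ) 0 0 = -1 := rfl
    have e01 : (A : Matrix (Fin 2) (Fin 2) ℝ) 0 1 = 1 := rfl
    have e10 : (A : Matrix (Fin 2) (Fin 2) ℝ) 1 0 = 0 := rfl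
    have e11 : (A : Matrix (Fin 2) (Fin 2) ℝ) 1 1 = 1 := rfl
    refine ⟨A, A, ?_, ?_, ?_, ?_⟩ <;> refine Prod.ext ?_ ?_
    · exact (glMap_pt_eq_iff A 1 0 1 0 (Or.inl one_ne_zero) (Or.inl one_ne_zero)).mpr
        ⟨-1, by rw [e00, e01]; norm_num, by rw [e10, e11]; norm_num⟩
    · exact (glMap_pt_eq_iff A 1 0 1 0 (Or.inl one_ne_zero) (Or.inl one_ne_zero)).mpr
        ⟨-1, by rw [e00, e01]; norm_num, by rw [e10, e11]; norm_num⟩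
    · exact (glMap_pt_eq_iff A 1 μ₂ 1 μ₁ (Or.inl one_ne_zero) (Or.inl one_ne_zero)).mpr
        ⟨Units.mk0 (μ₂ - 1) (sub_ne_zero.mpr h21),
          by rw [e00, e01]; simp; ring,
          by rw [e10, e11]; simp; linear_combination -hμ⟩
    · exact (glMap_pt_eq_iff A 1 μ₁ 1 μ₂ (Or.inl one_ne_zero) (Or.inl one_ne_zero)).mpr
        ⟨Units.mk0 (μ₁ - 1) (sub_ne_zero.mpr h11),
          by rw [e00, e01]; simp; ring,
          by rw [e10, e11]; simp; linear_combination -hμ⟩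
    · exact (glMap_pt_eq_iff A 0 1 1 1 (Or.inr one_ne_zero) (Or.inl one_ne_zero)).mpr
        ⟨1, by rw [e00, e01]; norm_num, by rw [e10, e11]; norm_num⟩
    · exact (glMap_pt_eq_iff A 0 1 1 1 (Or.inr one_ne_zero) (Or.inl one_ne_zero)).mpr
        ⟨1, by rw [e00, e01]; norm_num, by rw [e10, e11]; norm_num⟩
    · exact (glMap_pt_eq_iff A 1 1 0 1 (Or.inl one_ne_zero) (Or.inr one_ne_zero)).mpr
        ⟨1, by rw [e00, e01]; norm_num, by rw [e10, e11]; norm_num⟩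
    · exact (glMap_pt_eq_iff A 1 1 0 1 (Or.inl one_ne_zero) (Or.inr one_ne_zero)).mpr
        ⟨1, by rw [e00, e01]; norm_num, by rw [e10, e11]; norm_num⟩
end
end

section
/- Let μ₁, μ₂ ∈ ℝ∖{0,1} with μ₁ ≠ μ₂. There are no A, B ∈ GL₂(ℝ) such that the map (x,y) ↦ (A·x, B·y) on ℙ¹(ℝ)×ℙ¹(ℝ) fixes ([1:0],[1:0]) and ([1:μ₁],[1:μ₂]) and exchanges ([0:1],[0:1]) with ([1:1],[1:1]); indeed such A, B would force μ₁ = μ₂ = 2. -/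
noncomputable section

open ComplexConjugate

/-- The ruling-preserving map `(x, y) ↦ (A·x, B·y)` of `ℙ¹(ℝ) × ℙ¹(ℝ)`. -/
def mapAB (A B : GL (Fin 2) ℝ) (P : Pone ℝ × Pone ℝ) : Pone ℝ × Pone ℝ :=
  (glMap A P.1, glMap B P.2)

theorem key (A : GL (Fin 2) ℝ) (μ : ℝ) (hμ0 : μ ≠ 0)
    (h1 : glMap A R10 = R10) (h2 : glMap A (Rb μ) = Rb μ)
    (h3 : glMap A R01 = R11) (h4 : glMap A R11 = R01) : μ = 2 := by
  simp only [glMap, R10, R01, R11, Rb, pt, Projectivization.map_mk,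
    Projectivization.mk_eq_mk_iff, Matrix.mulVecLin_apply] at h1 h2 h3 h4
  obtain ⟨u1, hu1⟩ := h1
  obtain ⟨u2, hu2⟩ := h2
  obtain ⟨u3, hu3⟩ := h3
  obtain ⟨u4, hu4⟩ := h4
  have e11 := congrFun hu1 1
  have e20 := congrFun hu2 0
  have e21 := congrFun hu2 1
  have e30 := congrFun hu3 0
  have e31 := congrFun hu3 1
  have e40 := congrFun hu4 0
  simp only [Pi.smul_apply, Matrix.cons_val_zero, Matrix.cons_val_one, Matrix.head_cons,
    Matrix.mulVec, dotProduct, Fin.sum_univ_two, Units.smul_def, smul_eq_mul, mul_one, mul_zero,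
    zero_add, add_zero] at e11 e20 e21 e30 e31 e40
  have hb : (A : Matrix (Fin 2) (Fin 2) ℝ) 0 1 ≠ 0 := by rw [← e30]; exact u3.ne_zero
  have hu2m : (u2 : ℝ) * μ = (A : Matrix (Fin 2) (Fin 2) ℝ) 0 1 * μ := by
    rw [e21, ← e11, ← e31, ← e30]; ring
  have hu2' : (u2 : ℝ) = (A : Matrix (Fin 2) (Fin 2) ℝ) 0 1 := mul_right_cancel₀ hμ0 hu2m
  have hz : (A : Matrix (Fin 2) (Fin 2) ℝ) 0 1 * (μ - 2) = 0 := by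
    linear_combination hu2' - e20 + e40
  rcases mul_eq_zero.mp hz with h | h
  · exact absurd h hb
  · linarith

/-- Let `μ₁, μ₂ ∈ ℝ ∖ {0,1}` with `μ₁ ≠ μ₂`. There are no
`A, B ∈ GL₂(ℝ)` such that the map `(x,y) ↦ (A·x, B·y)` on `ℙ¹(ℝ) × ℙ¹(ℝ)` fixes
`([1:0],[1:0])` and `([1:μ₁],[1:μ₂])` and exchanges `([0:1],[0:1])` with `([1:1],[1:1])`;
indeed such `A, B` would force `μ₁ = μ₂ = 2`. -/
theorem statement13 (μ₁ μ₂ : ℝ)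
    (h10 : μ₁ ≠ 0) (h11 : μ₁ ≠ 1) (h20 : μ₂ ≠ 0) (h21 : μ₂ ≠ 1) (hne : μ₁ ≠ μ₂) :
    (∀ A B : GL (Fin 2) ℝ,
        mapAB A B (R10, R10) = (R10, R10) →
        mapAB A B (Rb μ₁, Rb μ₂) = (Rb μ₁, Rb μ₂) →
        mapAB A B (R01, R01) = (R11, R11) →
        mapAB A B (R11, R11) = (R01, R01) →
        μ₁ = 2 ∧ μ₂ = 2) ∧
    ¬∃ A B : GL (Fin 2) ℝ,
        mapAB A B (R10, R10) = (R10, R10) ∧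
        mapAB A B (Rb μ₁, Rb μ₂) = (Rb μ₁, Rb μ₂) ∧
        mapAB A B (R01, R01) = (R11, R11) ∧
        mapAB A B (R11, R11) = (R01, R01) := by
  have main : ∀ A B : GL (Fin 2) ℝ,
      mapAB A B (R10, R10) = (R10, R10) →
      mapAB A B (Rb μ₁, Rb μ₂) = (Rb μ₁, Rb μ₂) →
      mapAB A B (R01, R01) = (R11, R11) →
      mapAB A B (R11, R11) = (R01, R01) →
      μ₁ = 2 ∧ μ₂ = 2 := by
    intro A B h1 h2 h3 h4
    refine ⟨key A μ₁ h10 (congrArg Prod.fst h1) (congrArg Prod.fst h2)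
        (congrArg Prod.fst h3) (congrArg Prod.fst h4),
      key B μ₂ h20 (congrArg Prod.snd h1) (congrArg Prod.snd h2)
        (congrArg Prod.snd h3) (congrArg Prod.snd h4)⟩
  refine ⟨main, ?_⟩
  rintro ⟨A, B, h1, h2, h3, h4⟩
  obtain ⟨e1, e2⟩ := main A B h1 h2 h3 h4
  exact hne (e1.trans e2.symm)
end
end

section
/- Let k₁, k₂ ∈ (0,1). There are no A, B ∈ GL₂(ℝ) such that the induced map (x,y) ↦ (A·x, B·y) on ℙ¹(ℂ)×ℙ¹(ℂ) fixes the point ([1:i],[1:i]) and maps ([1:k₁i],[1:k₂i]) to ([1:−k₁i],[1:−k₂i]). -/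
noncomputable section

open ComplexConjugate

/-- A real matrix in `GL₂(ℝ)`, viewed as an element of `GL₂(ℂ)`. -/
def glR (A : GL (Fin 2) ℝ) : GL (Fin 2) ℂ :=
  Units.map (RingHom.toMonoidHom
    (Complex.ofRealHom.mapMatrix : Matrix (Fin 2) (Fin 2) ℝ →+* Matrix (Fin 2) (Fin 2) ℂ)) A

/-- The map `(x, y) ↦ (A·x, B·y)` of `ℙ¹(ℂ) × ℙ¹(ℂ)` induced by real matrices
`A, B ∈ GL₂(ℝ)`. -/
def mapRR (A B : GL (Fin 2) ℝ) (P : Pone ℂ × Pone ℂ) : Pone ℂ × Pone ℂ :=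
  (glMap (glR A) P.1, glMap (glR B) P.2)

/-- The point `[1 : b]` of `ℙ¹(ℂ)`. -/
def Pb (b : ℂ) : Pone ℂ := pt 1 b (Or.inl one_ne_zero)

lemma glR_coe (A : GL (Fin 2) ℝ) :
    ((glR A : Matrix (Fin 2) (Fin 2) ℂ)) = (A : Matrix (Fin 2) (Fin 2) ℝ).map Complex.ofReal := rfl

lemma key_s14 (k : ℝ) (hk0 : 0 < k) (A : GL (Fin 2) ℝ)
    (h1 : glMap (glR A) (Pb Complex.I) = Pb Complex.I)
    (h2 : glMap (glR A) (Pb ((k : ℂ) * Complex.I)) = Pb (-((k : ℂ) * Complex.I))) : False := by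
  set a : ℝ := (A : Matrix (Fin 2) (Fin 2) ℝ) 0 0 with ha
  set b : ℝ := (A : Matrix (Fin 2) (Fin 2) ℝ) 0 1 with hb
  set c : ℝ := (A : Matrix (Fin 2) (Fin 2) ℝ) 1 0 with hc
  set d : ℝ := (A : Matrix (Fin 2) (Fin 2) ℝ) 1 1 with hd
  unfold glMap Pb pt at h1 h2
  rw [Projectivization.map_mk, Projectivization.mk_eq_mk_iff] at h1 h2
  obtain ⟨u, hu⟩ := h1
  obtain ⟨v, hv⟩ := h2
  have hu0 := congrFun hu 0
  have hu1 := congrFun hu 1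
  have hv0 := congrFun hv 0
  have hv1 := congrFun hv 1
  simp only [Matrix.mulVecLin_apply, glR_coe, Matrix.mulVec, dotProduct,
    Fin.sum_univ_two, Matrix.map_apply, Pi.smul_apply, Matrix.cons_val_zero,
    Matrix.cons_val_one, Matrix.head_cons, Units.smul_def, smul_eq_mul, mul_one,
    ← ha, ← hb, ← hc, ← hd] at hu0 hu1 hv0 hv1
  -- hu0 : ↑u = ↑a + ↑b * I ; hu1 : ↑u * I = ↑c + ↑d * I
  -- hv0 : ↑v = ↑a + ↑b * (k*I) ; hv1 : ↑v * (-(k*I)) = ↑c + ↑d * (k*I)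
  have e1 : ((a : ℂ) + b * Complex.I) * Complex.I = c + d * Complex.I := by
    rw [← hu0]; exact hu1
  have e2 : ((a : ℂ) + b * ((k:ℂ) * Complex.I)) * (-((k:ℂ) * Complex.I))
      = c + d * ((k:ℂ) * Complex.I) := by
    rw [← hv0]; exact hv1
  simp only [Complex.ext_iff, Complex.add_re, Complex.add_im, Complex.mul_re,
    Complex.mul_im, Complex.neg_re, Complex.neg_im, Complex.I_re, Complex.I_im,
    Complex.ofReal_re, Complex.ofReal_im] at e1 e2
  obtain ⟨f1, f2⟩ := e1
  obtain ⟨f3, f4⟩ := e2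
  have hb0 : b = 0 := by nlinarith [sq_nonneg k]
  have ha0 : a = 0 := by nlinarith
  have : (u : ℂ) = 0 := by rw [hu0, ha0, hb0]; simp
  exact u.ne_zero this

/-- Let `k₁, k₂ ∈ (0,1)`. There are no `A, B ∈ GL₂(ℝ)` such that the
induced map `(x,y) ↦ (A·x, B·y)` on `ℙ¹(ℂ) × ℙ¹(ℂ)` fixes the point `([1:i],[1:i])` and maps
`([1:k₁i],[1:k₂i])` to `([1:−k₁i],[1:−k₂i])`. -/
theorem statement14 (k₁ k₂ : ℝ)
    (hk₁ : k₁ ∈ Set.Ioo (0 : ℝ) 1) (hk₂ : k₂ ∈ Set.Ioo (0 : ℝ) 1) :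
    ¬∃ A B : GL (Fin 2) ℝ,
        mapRR A B (Pb Complex.I, Pb Complex.I) = (Pb Complex.I, Pb Complex.I) ∧
        mapRR A B (Pb ((k₁ : ℂ) * Complex.I), Pb ((k₂ : ℂ) * Complex.I))
          = (Pb (-((k₁ : ℂ) * Complex.I)), Pb (-((k₂ : ℂ) * Complex.I))) := by
  rintro ⟨A, B, hfix, hmap⟩
  have h1 : glMap (glR A) (Pb Complex.I) = Pb Complex.I := congrArg Prod.fst hfix
  have h2 : glMap (glR A) (Pb ((k₁ : ℂ) * Complex.I)) = Pb (-((k₁ : ℂ) * Complex.I)) :=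
    congrArg Prod.fst hmap
  exact key_s14 k₁ hk₁.1 A h1 h2
end
end
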